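/- arXiv:2601.08362 — 2 statements merged into one kernel-verified Lean document; each statement's English description precedes it below -/
import Mathlib

section
/- Let z̄ = (x̄,ȳ) ∈ ℝ^m × S^n. Consider the statements: (a) the S-SOSC holds at z̄; (b) there exists an open neighborhood U of z̄ in ℝ^m × S^n such that the W-SOC holds uniformly on U; (c) there exists an open neighborhood V of ȳ in S^n such that the W-SOC holds uniformly on {x̄} × V. Then (a) implies (b), and (b) implies (c); moreover, if the SONC holds at z̄, then (a), (b) and (c) are equivalent. -/
open scoped Classical RealInnerProductSpace
open Matrix Set

noncomputable section

abbrev Mat (n : ℕ) : Type := Matrix (Fin n) (Fin n) ℝ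

abbrev Em (m : ℕ) : Type := EuclideanSpace ℝ (Fin m)

attribute [instance] Matrix.frobeniusNormedAddCommGroup Matrix.frobeniusNormedSpace

/-- The trace (Frobenius) inner product `⟨A,B⟩ = tr(AᵀB)` on matrices; for symmetric
matrices this is `tr(AB)`. -/
def minner {n : ℕ} (A B : Mat n) : ℝ := (Aᵀ * B).trace

/-- `P` is an orthogonal matrix. -/
def IsOrthoMat {n : ℕ} (P : Mat n) : Prop := P * Pᵀ = 1 ∧ Pᵀ * P = 1

/-- `(P, lam)` is an eigenvalue decomposition of `A` with orthogonal `P` and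
nonincreasing eigenvalue vector `lam`: `A = P·Diag(lam)·Pᵀ`. -/
def IsEigDecomp {n : ℕ} (A P : Mat n) (lam : Fin n → ℝ) : Prop :=
  IsOrthoMat P ∧ Antitone lam ∧ A = P * Matrix.diagonal lam * Pᵀ

/-- The stratum `M_{p,q}` of symmetric matrices with exactly `p` positive and `q` negative
eigenvalues. -/
def stratum (n p q : ℕ) : Set (Mat n) :=
  {A | ∃ P lam, IsEigDecomp A P lam ∧
    {i : Fin n | 0 < lam i}.ncard = p ∧ {i : Fin n | lam i < 0}.ncard = q}

/-- The metric projection `Π₊` onto the positive semidefinite cone (defined through an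
eigenvalue decomposition; the value is independent of the choice of decomposition). -/
noncomputable def piPlus {n : ℕ} (A : Mat n) : Mat n :=
  if h : ∃ P lam, IsEigDecomp A P lam then
    h.choose * Matrix.diagonal (fun i => max (h.choose_spec.choose i) 0) * h.chooseᵀ
  else 0

variable {m n : ℕ}

/-- `G(z) = g(x) + y`. -/
def Gmap (g : Em m → Mat n) (z : Em m × Mat n) : Mat n := g z.1 + z.2

/-- The adjoint `∇g(x) : Sⁿ → ℝᵐ` of the derivative `g'(x)`, characterized by
`⟨∇g(x)H, v⟩ = ⟨H, g'(x)v⟩`. -/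
def gradg (g : Em m → Mat n) (x : Em m) (H : Mat n) : Em m :=
  (EuclideanSpace.equiv (Fin m) ℝ).symm
    fun k => (Hᵀ * fderiv ℝ g x (EuclideanSpace.single k 1)).trace

/-- The Lagrangian `L(x,y) = f(x) + ⟨y, g(x)⟩`. -/
def Lfun (f : Em m → ℝ) (g : Em m → Mat n) (x : Em m) (y : Mat n) : ℝ :=
  f x + minner y (g x)

/-- The Hessian `∇²ₓₓL(x,y)` of `x ↦ L(x,y)`, as a continuous linear map `ℝᵐ → ℝᵐ`. -/
def hessL (f : Em m → ℝ) (g : Em m → Mat n) (x : Em m) (y : Mat n) : Em m →L[ℝ] Em m :=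
  fderiv ℝ (fun u => gradient (fun w => Lfun f g w y) u) x

/-- The KKT mapping `F(z) = (∇f(x) + ∇g(x)y, −g(x) + Π₊(G(z)))`. -/
def KKTF (f : Em m → ℝ) (g : Em m → Mat n) (z : Em m × Mat n) : Em m × Mat n :=
  (gradient f z.1 + gradg g z.1 z.2, - g z.1 + piPlus (Gmap g z))

/-- The lifted stratum `M̃_{p,q} = {z = (x,y) ∈ ℝᵐ × Sⁿ : G(z) ∈ M_{p,q}}`. -/
def lstratum (g : Em m → Mat n) (p q : ℕ) : Set (Em m × Mat n) :=
  {z | z.2.IsSymm ∧ Gmap g z ∈ stratum n p q}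

/-- The norm `‖(u,H)‖ = sqrt(‖u‖² + ‖H‖²)` on `ℝᵐ × Sⁿ` (Frobenius norm on matrices). -/
def pnorm {m n : ℕ} (w : Em m × Mat n) : ℝ := Real.sqrt (‖w.1‖ ^ 2 + ‖w.2‖ ^ 2)

/-- The weak strict Robinson constraint qualification (W-SRCQ) at `z`:
`g'(x)[ℝᵐ] + {PBPᵀ : B ∈ Sⁿ, B_{βγ} = 0, B_{γγ} = 0} = Sⁿ`
(for any eigenvalue decomposition `(P, lam)` of `G(z)`; independent of the choice). -/
def WSRCQ (g : Em m → Mat n) (z : Em m × Mat n) : Prop :=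
  ∀ P lam, IsEigDecomp (Gmap g z) P lam →
    ∀ C : Mat n, C.IsSymm →
      ∃ (v : Em m) (B : Mat n), B.IsSymm ∧
        (∀ i j, lam i = 0 → lam j < 0 → B i j = 0) ∧
        (∀ i j, lam i < 0 → lam j < 0 → B i j = 0) ∧
        C = fderiv ℝ g z.1 v + P * B * Pᵀ

/-- The constraint nondegeneracy at `z`:
`g'(x)[ℝᵐ] + {PBPᵀ : B ∈ Sⁿ, B_{ββ} = 0, B_{βγ} = 0, B_{γγ} = 0} = Sⁿ`. -/
def CNondeg (g : Em m → Mat n) (z : Em m × Mat n) : Prop :=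
  ∀ P lam, IsEigDecomp (Gmap g z) P lam →
    ∀ C : Mat n, C.IsSymm →
      ∃ (v : Em m) (B : Mat n), B.IsSymm ∧
        (∀ i j, lam i = 0 → lam j = 0 → B i j = 0) ∧
        (∀ i j, lam i = 0 → lam j < 0 → B i j = 0) ∧
        (∀ i j, lam i < 0 → lam j < 0 → B i j = 0) ∧
        C = fderiv ℝ g z.1 v + P * B * Pᵀ

/-- The strict Robinson constraint qualification (SRCQ) at a KKT pair `z`:
`g'(x)[ℝᵐ] + {PBPᵀ : B ∈ Sⁿ, B_{ββ} ⪰ 0, B_{βγ} = 0, B_{γγ} = 0} = Sⁿ`. -/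
def SRCQ (g : Em m → Mat n) (z : Em m × Mat n) : Prop :=
  ∀ P lam, IsEigDecomp (Gmap g z) P lam →
    ∀ C : Mat n, C.IsSymm →
      ∃ (v : Em m) (B : Mat n), B.IsSymm ∧
        (∀ u : Fin n → ℝ, (∀ i, lam i ≠ 0 → u i = 0) →
          0 ≤ ∑ i, ∑ j, u i * B i j * u j) ∧
        (∀ i j, lam i = 0 → lam j < 0 → B i j = 0) ∧
        (∀ i j, lam i < 0 → lam j < 0 → B i j = 0) ∧
        C = fderiv ℝ g z.1 v + P * B * Pᵀ

/-- The quadratic form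
`Q(z,v) = ⟨v, ∇²ₓₓL(x,y)v⟩ + 2·Σ_{i∈α}Σ_{j∈γ} (−λⱼ/λᵢ)·([Pᵀ(g'(x)v)P]_{ij})²`. -/
def Qform (f : Em m → ℝ) (g : Em m → Mat n) (z : Em m × Mat n)
    (P : Mat n) (lam : Fin n → ℝ) (v : Em m) : ℝ :=
  ⟪v, hessL f g z.1 z.2 v⟫ +
    2 * ∑ i : Fin n, ∑ j : Fin n,
      (if 0 < lam i ∧ lam j < 0 then
        (-lam j / lam i) * ((Pᵀ * fderiv ℝ g z.1 v * P) i j) ^ 2 else 0)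

/-- `v ∈ appl(z)`: the blocks `ββ`, `βγ`, `γγ` of `Pᵀ(g'(x)v)P` vanish. -/
def memAppl (g : Em m → Mat n) (z : Em m × Mat n)
    (P : Mat n) (lam : Fin n → ℝ) (v : Em m) : Prop :=
  (∀ i j, lam i = 0 → lam j = 0 → (Pᵀ * fderiv ℝ g z.1 v * P) i j = 0) ∧
  (∀ i j, lam i = 0 → lam j < 0 → (Pᵀ * fderiv ℝ g z.1 v * P) i j = 0) ∧
  (∀ i j, lam i < 0 → lam j < 0 → (Pᵀ * fderiv ℝ g z.1 v * P) i j = 0)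

/-- `v ∈ app(z)`: the blocks `βγ`, `γγ` of `Pᵀ(g'(x)v)P` vanish. -/
def memApp (g : Em m → Mat n) (z : Em m × Mat n)
    (P : Mat n) (lam : Fin n → ℝ) (v : Em m) : Prop :=
  (∀ i j, lam i = 0 → lam j < 0 → (Pᵀ * fderiv ℝ g z.1 v * P) i j = 0) ∧
  (∀ i j, lam i < 0 → lam j < 0 → (Pᵀ * fderiv ℝ g z.1 v * P) i j = 0)

/-- The weak second order condition (W-SOC) at `z`: `Q(z,v) ≠ 0` for every nonzero
`v ∈ appl(z)`. -/
def WSOC (f : Em m → ℝ) (g : Em m → Mat n) (z : Em m × Mat n) : Prop :=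
  ∀ P lam, IsEigDecomp (Gmap g z) P lam →
    ∀ v : Em m, v ≠ 0 → memAppl g z P lam v → Qform f g z P lam v ≠ 0

/-- The strong second order sufficient condition (S-SOSC) at `z`: `Q(z,v) > 0` for every
nonzero `v ∈ app(z)`. -/
def SSOSC (f : Em m → ℝ) (g : Em m → Mat n) (z : Em m × Mat n) : Prop :=
  ∀ P lam, IsEigDecomp (Gmap g z) P lam →
    ∀ v : Em m, v ≠ 0 → memApp g z P lam v → 0 < Qform f g z P lam v

/-- The second order necessary condition (SONC) at `z`. -/
def SONC (f : Em m → ℝ) (g : Em m → Mat n) (z : Em m × Mat n) : Prop :=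
  ∀ P lam, IsEigDecomp (Gmap g z) P lam →
    ∀ v : Em m, v ≠ 0 →
      (∀ u : Fin n → ℝ, (∀ i, lam i ≠ 0 → u i = 0) →
        0 ≤ ∑ i, ∑ j, u i * (Pᵀ * fderiv ℝ g z.1 v * P) i j * u j) →
      memApp g z P lam v → 0 ≤ Qform f g z P lam v

/-- The W-SOC holds uniformly on a set `S`: there is `c > 0` with `Q(z,v) ≥ c‖v‖²` for
every `z ∈ S` (in `ℝᵐ × Sⁿ`) and every `v ∈ appl(z)`. -/
def UnifWSOC (f : Em m → ℝ) (g : Em m → Mat n) (S : Set (Em m × Mat n)) : Prop :=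
  ∃ c : ℝ, 0 < c ∧ ∀ z ∈ S, z.2.IsSymm →
    ∀ P lam, IsEigDecomp (Gmap g z) P lam →
      ∀ v : Em m, memAppl g z P lam v → c * ‖v‖ ^ 2 ≤ Qform f g z P lam v

/-- `H ∈ T_z`: `H ∈ Sⁿ` with `(PᵀHP)_{ββ} = 0`. -/
def memTz {n : ℕ} (P : Mat n) (lam : Fin n → ℝ) (H : Mat n) : Prop :=
  H.IsSymm ∧ ∀ i j, lam i = 0 → lam j = 0 → (Pᵀ * H * P) i j = 0

/-- `Δ ∈ N_{G(z)}M_{p,q}`: `Δ ∈ Sⁿ` and `(PᵀΔP)_{ij} = 0` whenever `i ∉ β` or `j ∉ β`. -/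
def memNormal {n : ℕ} (P : Mat n) (lam : Fin n → ℝ) (Δ : Mat n) : Prop :=
  Δ.IsSymm ∧ ∀ i j, (lam i ≠ 0 ∨ lam j ≠ 0) → (Pᵀ * Δ * P) i j = 0

/-- The map `ξ_z : T_z → Sⁿ`, `ξ_z(H) = P·M·Pᵀ`. -/
def xiMap {n : ℕ} (P : Mat n) (lam : Fin n → ℝ) (H : Mat n) : Mat n :=
  P * (Matrix.of fun i j =>
    if 0 < lam i ∧ 0 < lam j then (Pᵀ * H * P) i j
    else if 0 < lam i ∧ lam j = 0 then (Pᵀ * H * P) i j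
    else if lam i = 0 ∧ 0 < lam j then (Pᵀ * H * P) i j
    else if 0 < lam i ∧ lam j < 0 then (lam i / (lam i - lam j)) * (Pᵀ * H * P) i j
    else if lam i < 0 ∧ 0 < lam j then (lam j / (lam j - lam i)) * (Pᵀ * H * P) i j
    else 0) * Pᵀ

/-- The linear map `𝒜_z(v,H) = (∇²ₓₓL(x,y)v − ∇g(x)(g'(x)v) + ∇g(x)H, −g'(x)v + ξ_z(H))`. -/
def Amap (f : Em m → ℝ) (g : Em m → Mat n) (z : Em m × Mat n)
    (P : Mat n) (lam : Fin n → ℝ) (v : Em m) (H : Mat n) : Em m × Mat n :=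
  (hessL f g z.1 z.2 v - gradg g z.1 (fderiv ℝ g z.1 v) + gradg g z.1 H,
    - fderiv ℝ g z.1 v + xiMap P lam H)

/-- The positive inertia index of `A` is `p`. -/
def posInertiaIs {n : ℕ} (A : Mat n) (p : ℕ) : Prop :=
  ∃ P lam, IsEigDecomp A P lam ∧ {i : Fin n | 0 < lam i}.ncard = p

/-- The negative inertia index of `A` is `q`. -/
def negInertiaIs {n : ℕ} (A : Mat n) (q : ℕ) : Prop :=
  ∃ P lam, IsEigDecomp A P lam ∧ {i : Fin n | lam i < 0}.ncard = q

end

/-!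
(a) ⇒ (b) by contradiction and compactness: otherwise there are `zₖ → z̄`, eigenvalue
decompositions `(Pₖ, λₖ)` of `G(zₖ)` and unit vectors `vₖ ∈ appl(zₖ)` with `Q(zₖ, vₖ) < 1/(k+1)`.
Along a subsequence `Pₖ → P̄`, `vₖ → v̄`, and `(P̄, λ̄)` decomposes `G(z̄)`. Since the terms
`(-λⱼ/λᵢ) Mᵢⱼ²` of `Q` stay bounded, an entry `Mᵢⱼ` with `λᵢ → 0`, `λ̄ⱼ < 0` must tend to `0`, so
`v̄ ∈ app(z̄)`; lower semicontinuity of that sum then gives `Q(z̄, v̄) ≤ 0`.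

(c) ⇒ (a): replacing `ȳ` by `ȳ + t·P E_β Pᵀ` turns the zero eigenvalues of `G(z̄)` into `t > 0`.
Then every `v ∈ app(z̄)` lies in `appl` of the perturbed point, with the same curvature sum, and
`t → 0⁺` gives `Q(z̄, v) ≥ c‖v‖²`.
-/

open Filter Topology InnerProductSpace

theorem LowerSemicontinuous.le_of_tendsto {α β : Type*} [TopologicalSpace α] {F : α → ℝ}
    (hF : LowerSemicontinuous F) {l : Filter β} [l.NeBot] {x : β → α} {b : β → ℝ} {x₀ : α}
    {b₀ : ℝ} (hx : Tendsto x l (𝓝 x₀)) (hb : Tendsto b l (𝓝 b₀))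
    (hle : ∀ᶠ k in l, F (x k) ≤ b k) : F x₀ ≤ b₀ := by
  by_contra! hlt
  obtain ⟨y, hby, hyF⟩ := exists_between hlt
  obtain ⟨k, hk1, hk2, hk3⟩ :=
    ((hx.eventually (hF x₀ y hyF)).and ((hb.eventually (gt_mem_nhds hby)).and hle)).exists
  linarith

section Curvature

variable {ι : Type*}

noncomputable def curvatureSum [Fintype ι] (lam : ι → ℝ) (M : Matrix ι ι ℝ) : ℝ :=
  ∑ i, ∑ j, if 0 < lam i ∧ lam j < 0 then -lam j / lam i * M i j ^ 2 else 0

theorem curvatureSum_summand_nonneg (lam : ι → ℝ) (M : Matrix ι ι ℝ) (i j : ι) :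
    0 ≤ if 0 < lam i ∧ lam j < 0 then -lam j / lam i * M i j ^ 2 else 0 := by
  split_ifs with h
  · exact mul_nonneg (div_nonneg (neg_nonneg.2 h.2.le) h.1.le) (sq_nonneg _)
  · exact le_rfl

noncomputable def liftZeros (t : ℝ) (lam : ι → ℝ) : ι → ℝ :=
  fun i => if lam i = 0 then t else lam i

theorem liftZeros_ne_zero {t : ℝ} (ht : t ≠ 0) (lam : ι → ℝ) (i : ι) :
    liftZeros t lam i ≠ 0 := by
  unfold liftZeros; split_ifs with hi <;> assumption

theorem liftZeros_neg_iff {t : ℝ} (ht : 0 ≤ t) {lam : ι → ℝ} {i : ι} :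
    liftZeros t lam i < 0 ↔ lam i < 0 := by
  unfold liftZeros; split_ifs with hi <;> simp [hi, ht]

theorem eventually_forall_le_of_pos [Finite ι] (lam : ι → ℝ) :
    ∀ᶠ t in 𝓝[>] (0 : ℝ), ∀ i, 0 < lam i → t ≤ lam i :=
  eventually_all.2 fun i => by
    by_cases hi : 0 < lam i
    · exact ((eventually_lt_nhds hi).filter_mono nhdsWithin_le_nhds).mono fun t ht _ => ht.le
    · exact Eventually.of_forall fun t h => absurd h hi

variable [Fintype ι]

theorem neg_mul_sq_le_mul_curvatureSum {lam : ι → ℝ} {i j : ι} (hi : 0 < lam i) (hj : lam j < 0)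
    (M : Matrix ι ι ℝ) : -lam j * M i j ^ 2 ≤ lam i * curvatureSum lam M := by
  have hterm : -lam j / lam i * M i j ^ 2 ≤ curvatureSum lam M := by
    have := (Finset.single_le_sum (fun j _ => curvatureSum_summand_nonneg lam M i j)
      (Finset.mem_univ j)).trans (Finset.single_le_sum (f := fun i => ∑ j, _)
        (fun i _ => Finset.sum_nonneg fun j _ => curvatureSum_summand_nonneg lam M i j)
        (Finset.mem_univ i))
    rwa [if_pos ⟨hi, hj⟩] at this
  calc -lam j * M i j ^ 2 = lam i * (-lam j / lam i * M i j ^ 2) := by field_simp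
    _ ≤ lam i * curvatureSum lam M := mul_le_mul_of_nonneg_left hterm hi.le

theorem curvatureSum_smul (lam : ι → ℝ) (c : ℝ) (M : Matrix ι ι ℝ) :
    curvatureSum lam (c • M) = c ^ 2 * curvatureSum lam M := by
  simp only [curvatureSum, Finset.mul_sum, Matrix.smul_apply, smul_eq_mul, mul_ite, mul_zero]
  congr! 3 with i _ j _
  ring

theorem lowerSemicontinuous_curvatureSum :
    LowerSemicontinuous fun p : (ι → ℝ) × Matrix ι ι ℝ => curvatureSum p.1 p.2 := by
  refine lowerSemicontinuous_sum fun i _ => lowerSemicontinuous_sum fun j _ => fun p => ?_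
  by_cases h : 0 < p.1 i ∧ p.1 j < 0
  · have hopen : IsOpen {q : (ι → ℝ) × Matrix ι ι ℝ | 0 < q.1 i ∧ q.1 j < 0} :=
      (isOpen_lt continuous_const ((continuous_apply i).comp continuous_fst)).inter
        (isOpen_lt ((continuous_apply j).comp continuous_fst) continuous_const)
    refine ContinuousAt.lowerSemicontinuousAt (ContinuousAt.congr
      (f := fun q : (ι → ℝ) × Matrix ι ι ℝ => -q.1 j / q.1 i * q.2 i j ^ 2) ?_ ?_)
    · exact (((continuous_apply j).comp continuous_fst).neg.continuousAt.div
        ((continuous_apply i).comp continuous_fst).continuousAt h.1.ne').mul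
        ((continuous_snd.matrix_elem i j).pow 2).continuousAt
    · filter_upwards [hopen.mem_nhds h] with q hq
      rw [if_pos hq]
  · intro y hy
    rw [if_neg h] at hy
    exact Eventually.of_forall fun q => hy.trans_le (curvatureSum_summand_nonneg q.1 q.2 i j)

/-- Where `λᵢ > 0 > λⱼ`, the bound gives `Mᵢⱼ² ≤ λᵢ b / (-λⱼ)`, which tends to `0` as `λᵢ → 0`. -/
theorem apply_eq_zero_of_tendsto_of_curvatureSum_le {α : Type*} {l : Filter α} [l.NeBot]
    {lam : α → ι → ℝ} {M : α → Matrix ι ι ℝ} {b : α → ℝ} {lam₀ : ι → ℝ} {M₀ : Matrix ι ι ℝ}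
    {b₀ : ℝ} (hlam : Tendsto lam l (𝓝 lam₀)) (hM : Tendsto M l (𝓝 M₀)) (hb : Tendsto b l (𝓝 b₀))
    (hle : ∀ᶠ k in l, curvatureSum (lam k) (M k) ≤ b k)
    (hzero : ∀ᶠ k in l, ∀ i j, lam k i ≤ 0 → lam k j < 0 → M k i j = 0)
    {i j : ι} (hi : lam₀ i ≤ 0) (hj : lam₀ j < 0) : M₀ i j = 0 := by
  have hlam_i := tendsto_pi_nhds.1 hlam i
  have hlam_j := tendsto_pi_nhds.1 hlam j
  have hbound : ∀ᶠ k in l, -lam k j * M k i j ^ 2 ≤ max (lam k i) 0 * b k := by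
    filter_upwards [hle, hzero, hlam_j.eventually_lt_const hj] with k hle hzero hj
    rcases lt_or_ge 0 (lam k i) with hi | hi
    · rw [max_eq_left hi.le]
      exact (neg_mul_sq_le_mul_curvatureSum hi hj (M k)).trans
        (mul_le_mul_of_nonneg_left hle hi.le)
    · rw [hzero i j hi hj, max_eq_right hi]
      simp
  have hlim := le_of_tendsto_of_tendsto
    (hlam_j.neg.mul ((((continuous_apply_apply i j).tendsto M₀).comp hM).pow 2))
    ((hlam_i.max tendsto_const_nhds).mul hb) hbound
  rw [max_eq_right hi, zero_mul] at hlim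
  exact pow_eq_zero_iff two_ne_zero |>.1 <| le_antisymm
    (nonpos_of_mul_nonpos_right hlim (neg_pos.2 hj)) (sq_nonneg _)

theorem curvatureSum_liftZeros {t : ℝ} (ht : 0 < t) {lam : ι → ℝ} {M : Matrix ι ι ℝ}
    (hM : ∀ i j, lam i = 0 → lam j < 0 → M i j = 0) :
    curvatureSum (liftZeros t lam) M = curvatureSum lam M := by
  refine Finset.sum_congr rfl fun i _ => Finset.sum_congr rfl fun j _ => ?_
  by_cases hj : lam j < 0
  · rw [show liftZeros t lam j = lam j from if_neg hj.ne]
    by_cases hi : lam i = 0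
    · simp [liftZeros, hi, hM i j hi hj]
    · rw [show liftZeros t lam i = lam i from if_neg hi]
  · simp [hj, liftZeros_neg_iff ht.le]

end Curvature

section Spectral

variable {n : ℕ}

-- `Mat n` carries `Matrix`'s product topology, for which Mathlib registers no such instance.
instance : FirstCountableTopology (Mat n) :=
  inferInstanceAs (FirstCountableTopology (Fin n → Fin n → ℝ))

theorem IsOrthoMat.abs_apply_le {P : Mat n} (hP : IsOrthoMat P) (i j : Fin n) : |P i j| ≤ 1 := by
  have hrow : ∑ k, P i k ^ 2 = 1 := by
    simpa [Matrix.mul_apply, sq] using congrFun (congrFun hP.1 i) i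
  have : P i j ^ 2 ≤ 1 :=
    hrow ▸ Finset.single_le_sum (fun k _ => sq_nonneg (P i k)) (Finset.mem_univ j)
  exact abs_le_one_iff_mul_self_le_one.mpr (by nlinarith)

theorem isCompact_setOf_isOrthoMat : IsCompact {P : Mat n | IsOrthoMat P} :=
  IsCompact.of_isClosed_subset
    (isCompact_univ_pi fun _ => isCompact_univ_pi fun _ => isCompact_Icc (a := (-1 : ℝ)) (b := 1))
    ((isClosed_eq (continuous_id.matrix_mul continuous_id.matrix_transpose) continuous_const).inter
      (isClosed_eq (continuous_id.matrix_transpose.matrix_mul continuous_id) continuous_const))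
    fun _ hP => Set.mem_univ_pi.2 fun i => Set.mem_univ_pi.2 fun j =>
      abs_le.1 (hP.abs_apply_le i j)

theorem IsEigDecomp.eq_diag {A P : Mat n} {lam : Fin n → ℝ} (h : IsEigDecomp A P lam) :
    lam = fun i => (Pᵀ * A * P) i i := by
  obtain ⟨⟨-, hP⟩, -, rfl⟩ := h
  ext i
  simp [← Matrix.mul_assoc, hP, Matrix.mul_assoc _ _ P]

theorem tendsto_of_isEigDecomp {α : Type*} {l : Filter α} {A P : α → Mat n}
    {lam : α → Fin n → ℝ} {A₀ P₀ : Mat n} (hdec : ∀ k, IsEigDecomp (A k) (P k) (lam k))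
    (hA : Tendsto A l (𝓝 A₀)) (hP : Tendsto P l (𝓝 P₀)) :
    Tendsto lam l (𝓝 fun i => (P₀ᵀ * A₀ * P₀) i i) := by
  have hcont : Continuous fun p : Mat n × Mat n => fun i => (p.1ᵀ * p.2 * p.1) i i :=
    continuous_pi fun i =>
      ((continuous_fst.matrix_transpose.matrix_mul continuous_snd).matrix_mul
        continuous_fst).matrix_elem i i
  have h := (hcont.tendsto (P₀, A₀)).comp (hP.prodMk_nhds hA)
  exact h.congr fun k => ((hdec k).eq_diag).symm

theorem isClosed_setOf_isEigDecomp :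
    IsClosed {p : Mat n × Mat n × (Fin n → ℝ) | IsEigDecomp p.1 p.2.1 p.2.2} := by
  have hP : Continuous fun p : Mat n × Mat n × (Fin n → ℝ) => p.2.1 := continuous_snd.fst
  have hlam : Continuous fun p : Mat n × Mat n × (Fin n → ℝ) => p.2.2 := continuous_snd.snd
  simp only [IsEigDecomp, IsOrthoMat, Set.ofPred_and]
  exact ((isClosed_eq (hP.matrix_mul hP.matrix_transpose) continuous_const).inter
    (isClosed_eq (hP.matrix_transpose.matrix_mul hP) continuous_const)).inter
    ((isClosed_antitone.preimage hlam).inter (isClosed_eq continuous_fst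
      ((hP.matrix_mul hlam.matrix_diagonal).matrix_mul hP.matrix_transpose)))

theorem IsEigDecomp.add_smul_liftZeros {A P : Mat n} {lam : Fin n → ℝ} (h : IsEigDecomp A P lam)
    {t : ℝ} (ht : 0 < t) (hle : ∀ i, 0 < lam i → t ≤ lam i) :
    IsEigDecomp (A + t • (P * Matrix.diagonal (fun i => if lam i = 0 then 1 else 0) * Pᵀ)) P
      (liftZeros t lam) := by
  obtain ⟨hP, hanti, rfl⟩ := h
  refine ⟨hP, fun i j hij => ?_, ?_⟩
  · have := hanti hij
    unfold liftZeros
    split_ifs with hj hi hi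
    · exact le_rfl
    · exact hle i (lt_of_le_of_ne (hj ▸ this) (Ne.symm hi))
    · exact (hi ▸ this).trans ht.le
    · exact this
  · have : Matrix.diagonal (liftZeros t lam) =
        Matrix.diagonal lam + t • Matrix.diagonal (fun i => if lam i = 0 then 1 else 0) := by
      rw [← Matrix.diagonal_smul, Matrix.diagonal_add]
      congr 1
      ext i; unfold liftZeros; split_ifs with hi <;> simp [hi]
    rw [this, Matrix.mul_add, Matrix.add_mul, Matrix.mul_smul, Matrix.smul_mul]

end Spectral

section SecondOrder

variable {m n : ℕ} {f : Em m → ℝ} {g : Em m → Mat n}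

noncomputable def minnerBilin (n : ℕ) : Mat n →L[ℝ] Mat n →L[ℝ] ℝ :=
  LinearMap.toContinuousLinearMap
    (LinearMap.toContinuousLinearMap.toLinearMap ∘ₗ
      LinearMap.mk₂ ℝ minner
        (fun A B C => by simp [minner, Matrix.transpose_add, Matrix.add_mul])
        (fun c A B => by simp [minner, Matrix.transpose_smul])
        (fun A B C => by simp [minner, Matrix.mul_add])
        (fun c A B => by simp [minner]))

theorem contDiff_Lfun (hf : ContDiff ℝ 2 f) (hg : ContDiff ℝ 2 g) :
    ContDiff ℝ 2 fun p : Mat n × Em m => Lfun f g p.2 p.1 :=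
  (hf.comp contDiff_snd).add ((minnerBilin n).isBoundedBilinearMap.contDiff.comp
    (contDiff_fst.prodMk (hg.comp contDiff_snd)))

theorem contDiff_gradient_Lfun (hf : ContDiff ℝ 2 f) (hg : ContDiff ℝ 2 g) :
    ContDiff ℝ 1 fun p : Mat n × Em m => gradient (fun w => Lfun f g w p.1) p.2 := by
  have h : ContDiff ℝ 1 fun p : Mat n × Em m => fderiv ℝ (fun w => Lfun f g w p.1) p.2 :=
    ContDiff.fderiv (f := fun (p : Mat n × Em m) (w : Em m) => Lfun f g w p.1)
      ((contDiff_Lfun hf hg).comp (contDiff_fst.fst.prodMk contDiff_snd)) contDiff_snd (by norm_num)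
  exact (toDual ℝ (Em m)).symm.toLinearIsometry.toContinuousLinearMap.contDiff.comp h

theorem continuous_hessL (hf : ContDiff ℝ 2 f) (hg : ContDiff ℝ 2 g) :
    Continuous fun z : Em m × Mat n => hessL f g z.1 z.2 := by
  have hp : ContDiff ℝ 1 fun q : (Em m × Mat n) × Em m => (q.1.2, q.2) :=
    contDiff_fst.snd.prodMk contDiff_snd
  have h := (contDiff_gradient_Lfun hf hg).comp hp
  have hgrad : ContDiff ℝ 1 (Function.uncurry fun (z : Em m × Mat n) (u : Em m) =>
      gradient (fun w => Lfun f g w z.2) u) := h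
  exact (hgrad.fderiv (n := 0) contDiff_fst (by norm_num)).continuous

theorem continuous_inner_hessL (hf : ContDiff ℝ 2 f) (hg : ContDiff ℝ 2 g) :
    Continuous fun p : (Em m × Mat n) × Em m => ⟪p.2, hessL f g p.1.1 p.1.2 p.2⟫ :=
  continuous_snd.inner (((continuous_hessL hf hg).comp continuous_fst).clm_apply continuous_snd)

theorem Qform_eq (z : Em m × Mat n) (P : Mat n) (lam : Fin n → ℝ) (v : Em m) :
    Qform f g z P lam v =
      ⟪v, hessL f g z.1 z.2 v⟫ + 2 * curvatureSum lam (Pᵀ * fderiv ℝ g z.1 v * P) :=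
  rfl

theorem conj_fderiv_smul (x : Em m) (P : Mat n) (c : ℝ) (v : Em m) :
    Pᵀ * fderiv ℝ g x (c • v) * P = c • (Pᵀ * fderiv ℝ g x v * P) := by
  rw [map_smul, Matrix.mul_smul, Matrix.smul_mul]

theorem Qform_smul (z : Em m × Mat n) (P : Mat n) (lam : Fin n → ℝ) (c : ℝ) (v : Em m) :
    Qform f g z P lam (c • v) = c ^ 2 * Qform f g z P lam v := by
  rw [Qform_eq, Qform_eq, conj_fderiv_smul, curvatureSum_smul, map_smul, real_inner_smul_left,
    real_inner_smul_right]
  ring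

theorem Qform_zero (z : Em m × Mat n) (P : Mat n) (lam : Fin n → ℝ) :
    Qform f g z P lam 0 = 0 := by
  simpa using Qform_smul (f := f) (g := g) z P lam 0 0

theorem memAppl_smul {z : Em m × Mat n} {P : Mat n} {lam : Fin n → ℝ} {v : Em m}
    (h : memAppl g z P lam v) (c : ℝ) : memAppl g z P lam (c • v) := by
  simp only [memAppl, conj_fderiv_smul, Matrix.smul_apply, smul_eq_mul, mul_eq_zero] at h ⊢
  exact ⟨fun i j hi hj => .inr (h.1 i j hi hj), fun i j hi hj => .inr (h.2.1 i j hi hj),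
    fun i j hi hj => .inr (h.2.2 i j hi hj)⟩

theorem memApp_iff {z : Em m × Mat n} {P : Mat n} {lam : Fin n → ℝ} {v : Em m} :
    memApp g z P lam v ↔ ∀ i j, lam i ≤ 0 → lam j < 0 → (Pᵀ * fderiv ℝ g z.1 v * P) i j = 0 :=
  ⟨fun h i j hi hj => hi.lt_or_eq.elim (fun hi => h.2 i j hi hj) (fun hi => h.1 i j hi hj),
    fun h => ⟨fun i j hi hj => h i j hi.le hj, fun i j hi hj => h i j hi.le hj⟩⟩

theorem UnifWSOC.mono {S T : Set (Em m × Mat n)} (h : UnifWSOC f g T) (hST : S ⊆ T) :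
    UnifWSOC f g S :=
  let ⟨c, hc, hT⟩ := h
  ⟨c, hc, fun z hz => hT z (hST hz)⟩

end SecondOrder

section Main

variable {m n : ℕ} {f : Em m → ℝ} {g : Em m → Mat n}

theorem continuous_Gmap (hg : Continuous g) : Continuous (Gmap g) :=
  (hg.comp continuous_fst).add continuous_snd

theorem exists_seq_of_forall_not_unifWSOC {zbar : Em m × Mat n}
    (h : ∀ U, IsOpen U → zbar ∈ U → ¬UnifWSOC f g U) :
    ∃ (z : ℕ → Em m × Mat n) (P : ℕ → Mat n) (lam : ℕ → Fin n → ℝ) (w : ℕ → Em m),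
      Tendsto z atTop (𝓝 zbar) ∧ (∀ k, IsEigDecomp (Gmap g (z k)) (P k) (lam k)) ∧
      (∀ k, ‖w k‖ = 1) ∧ (∀ k, memAppl g (z k) (P k) (lam k) (w k)) ∧
      ∀ k, Qform f g (z k) (P k) (lam k) (w k) < 1 / ((k : ℝ) + 1) := by
  have hfail : ∀ k : ℕ, ∃ z ∈ Metric.ball zbar (1 / ((k : ℝ) + 1)), ∃ P lam,
      IsEigDecomp (Gmap g z) P lam ∧ ∃ v, memAppl g z P lam v ∧
        Qform f g z P lam v < 1 / ((k : ℝ) + 1) * ‖v‖ ^ 2 := fun k => by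
    have hk := h (Metric.ball zbar (1 / ((k : ℝ) + 1))) Metric.isOpen_ball
      (Metric.mem_ball_self Nat.one_div_pos_of_nat)
    simp only [UnifWSOC, not_exists, not_and, not_forall, not_le] at hk
    obtain ⟨z, hz, -, P, lam, hdec, v, hv, hQ⟩ := hk _ Nat.one_div_pos_of_nat
    exact ⟨z, hz, P, lam, hdec, v, hv, hQ⟩
  choose z hz P lam hdec v happl hQ using hfail
  have hv : ∀ k, v k ≠ 0 := fun k hk => by
    simpa [hk, Qform_zero] using hQ k
  refine ⟨z, P, lam, fun k => ‖v k‖⁻¹ • v k,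
    tendsto_iff_dist_tendsto_zero.2 (squeeze_zero (fun _ => dist_nonneg) (fun k => (hz k).le)
      tendsto_one_div_add_atTop_nhds_zero_nat),
    hdec, fun k => norm_smul_inv_norm (hv k), fun k => memAppl_smul (happl k) _, fun k => ?_⟩
  have hpos : 0 < ‖v k‖ := norm_pos_iff.2 (hv k)
  rw [Qform_smul]
  calc ‖v k‖⁻¹ ^ 2 * Qform f g (z k) (P k) (lam k) (v k)
      < ‖v k‖⁻¹ ^ 2 * (1 / ((k : ℝ) + 1) * ‖v k‖ ^ 2) :=
        mul_lt_mul_of_pos_left (hQ k) (by positivity)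
    _ = 1 / ((k : ℝ) + 1) := by field_simp

theorem continuous_conj_fderiv (hg : Continuous (fderiv ℝ g)) :
    Continuous fun p : Mat n × Em m × Em m => p.1ᵀ * fderiv ℝ g p.2.1 p.2.2 * p.1 :=
  (continuous_fst.matrix_transpose.matrix_mul
    ((hg.comp continuous_snd.fst).clm_apply continuous_snd.snd)).matrix_mul continuous_fst

theorem not_SSOSC_of_tendsto (hf : ContDiff ℝ 2 f) (hg : ContDiff ℝ 2 g)
    {zbar : Em m × Mat n} {z : ℕ → Em m × Mat n} {P : ℕ → Mat n} {lam : ℕ → Fin n → ℝ}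
    {w : ℕ → Em m} {ε : ℕ → ℝ} (hz : Tendsto z atTop (𝓝 zbar)) (hε : Tendsto ε atTop (𝓝 0))
    (hdec : ∀ k, IsEigDecomp (Gmap g (z k)) (P k) (lam k)) (hw : ∀ k, ‖w k‖ = 1)
    (happl : ∀ k, memAppl g (z k) (P k) (lam k) (w k))
    (hQ : ∀ k, Qform f g (z k) (P k) (lam k) (w k) ≤ ε k) :
    ¬SSOSC f g zbar := by
  intro hS
  obtain ⟨⟨P₀, w₀⟩, ⟨-, hw₀⟩, φ, hφ, hlim⟩ :=
    (isCompact_setOf_isOrthoMat.prod (isCompact_sphere (0 : Em m) 1)).tendsto_subseq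
      (x := fun k => (P k, w k)) fun k => ⟨(hdec k).1, mem_sphere_zero_iff_norm.2 (hw k)⟩
  have hzφ : Tendsto (fun k => z (φ k)) atTop (𝓝 zbar) := hz.comp hφ.tendsto_atTop
  have hPφ : Tendsto (fun k => P (φ k)) atTop (𝓝 P₀) := (continuous_fst.tendsto _).comp hlim
  have hwφ : Tendsto (fun k => w (φ k)) atTop (𝓝 w₀) := (continuous_snd.tendsto _).comp hlim
  have hG : Tendsto (fun k => Gmap g (z (φ k))) atTop (𝓝 (Gmap g zbar)) :=
    ((continuous_Gmap hg.continuous).tendsto _).comp hzφ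
  have hlam := tendsto_of_isEigDecomp (fun k => hdec (φ k)) hG hPφ
  have hdec₀ := isClosed_setOf_isEigDecomp.mem_of_tendsto (hG.prodMk_nhds (hPφ.prodMk_nhds hlam))
    (Eventually.of_forall fun k => hdec (φ k))
  have hM := ((continuous_conj_fderiv (hg.continuous_fderiv two_ne_zero)).tendsto
    (P₀, zbar.1, w₀)).comp (hPφ.prodMk_nhds (hzφ.fst_nhds.prodMk_nhds hwφ))
  have hH := ((continuous_inner_hessL hf hg).tendsto (zbar, w₀)).comp (hzφ.prodMk_nhds hwφ)
  have hb := ((hε.comp hφ.tendsto_atTop).sub hH).div_const 2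
  have hle : ∀ᶠ k in atTop, curvatureSum (lam (φ k))
      ((P (φ k))ᵀ * fderiv ℝ g (z (φ k)).1 (w (φ k)) * P (φ k)) ≤
        (ε (φ k) - ⟪w (φ k), hessL f g (z (φ k)).1 (z (φ k)).2 (w (φ k))⟫) / 2 :=
    Eventually.of_forall fun k => by
      have := hQ (φ k)
      rw [Qform_eq] at this
      linarith
  have happ₀ : memApp g zbar P₀ _ w₀ := memApp_iff.2 fun i j =>
    apply_eq_zero_of_tendsto_of_curvatureSum_le hlam hM hb hle
      (Eventually.of_forall fun k => memApp_iff.1 (happl (φ k)).2)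
  have hcurv := lowerSemicontinuous_curvatureSum.le_of_tendsto (hlam.prodMk_nhds hM) hb hle
  have hQ₀ := hS P₀ _ hdec₀ w₀ (ne_zero_of_mem_sphere one_ne_zero ⟨w₀, hw₀⟩) happ₀
  rw [Qform_eq] at hQ₀
  linarith

theorem exists_unifWSOC_of_SSOSC (hf : ContDiff ℝ 2 f) (hg : ContDiff ℝ 2 g)
    {zbar : Em m × Mat n} (hS : SSOSC f g zbar) :
    ∃ U : Set (Em m × Mat n), IsOpen U ∧ zbar ∈ U ∧ UnifWSOC f g U := by
  by_contra! h
  obtain ⟨z, P, lam, w, hz, hdec, hw, happl, hQ⟩ := exists_seq_of_forall_not_unifWSOC h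
  exact not_SSOSC_of_tendsto hf hg hz tendsto_one_div_add_atTop_nhds_zero_nat hdec hw happl
    (fun k => (hQ k).le) hS

theorem SSOSC_of_unifWSOC_slice (hf : ContDiff ℝ 2 f) (hg : ContDiff ℝ 2 g)
    {zbar : Em m × Mat n} (hsym : zbar.2.IsSymm) {V : Set (Mat n)} (hV : IsOpen V)
    (hyV : zbar.2 ∈ V) (hW : UnifWSOC f g (({zbar.1} : Set (Em m)) ×ˢ V)) :
    SSOSC f g zbar := by
  obtain ⟨c, hc, hW⟩ := hW
  intro P lam hdec v hv happ
  set D : Mat n := P * Matrix.diagonal (fun i => if lam i = 0 then 1 else 0) * Pᵀ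
  have hD : D.IsSymm := by
    simp [D, Matrix.IsSymm, Matrix.transpose_mul, Matrix.mul_assoc]
  have hyt : Tendsto (fun t : ℝ => zbar.2 + t • D) (𝓝[>] 0) (𝓝 zbar.2) :=
    ((by fun_prop : Continuous fun t : ℝ => zbar.2 + t • D).tendsto' 0 _ (by simp)).mono_left
      nhdsWithin_le_nhds
  have hbound : ∀ᶠ t in 𝓝[>] (0 : ℝ), c * ‖v‖ ^ 2 ≤
      ⟪v, hessL f g zbar.1 (zbar.2 + t • D) v⟫ +
        2 * curvatureSum lam (Pᵀ * fderiv ℝ g zbar.1 v * P) := by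
    filter_upwards [self_mem_nhdsWithin, hyt (hV.mem_nhds hyV), eventually_forall_le_of_pos lam]
      with t ht htV hle
    have hdec_t : IsEigDecomp (Gmap g (zbar.1, zbar.2 + t • D)) P (liftZeros t lam) := by
      simpa only [Gmap, add_assoc] using hdec.add_smul_liftZeros ht hle
    have happl_t : memAppl g (zbar.1, zbar.2 + t • D) P (liftZeros t lam) v :=
      ⟨fun i j hi _ => absurd hi (liftZeros_ne_zero ht.ne' lam i),
        fun i j hi _ => absurd hi (liftZeros_ne_zero ht.ne' lam i),
        fun i j hi hj =>
          happ.2 i j ((liftZeros_neg_iff ht.le).1 hi) ((liftZeros_neg_iff ht.le).1 hj)⟩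
    have hQ := hW (zbar.1, zbar.2 + t • D) ⟨rfl, htV⟩ (hsym.add (hD.smul t)) P _ hdec_t v happl_t
    rwa [Qform_eq, curvatureSum_liftZeros ht happ.1] at hQ
  have hlim : Tendsto (fun t : ℝ => ⟪v, hessL f g zbar.1 (zbar.2 + t • D) v⟫ +
      2 * curvatureSum lam (Pᵀ * fderiv ℝ g zbar.1 v * P)) (𝓝[>] 0)
      (𝓝 (Qform f g zbar P lam v)) := by
    have hcont : Continuous fun t : ℝ => ((zbar.1, zbar.2 + t • D), v) := by fun_prop
    have h := ((continuous_inner_hessL hf hg).comp hcont).tendsto' 0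
      ⟪v, hessL f g zbar.1 zbar.2 v⟫ (by simp)
    exact (h.mono_left nhdsWithin_le_nhds).add_const _
  exact (mul_pos hc (pow_pos (norm_pos_iff.2 hv) 2)).trans_le (ge_of_tendsto hlim hbound)

end Main

theorem SSOSC_iff_uniform_WSOC_general {m n : ℕ}
    (f : Em m → ℝ) (g : Em m → Mat n)
    (hf : ContDiff ℝ 2 f) (hg : ContDiff ℝ 2 g)
    (zbar : Em m × Mat n) (hsym : zbar.2.IsSymm) :
    (SSOSC f g zbar →
      ∃ U : Set (Em m × Mat n), IsOpen U ∧ zbar ∈ U ∧ UnifWSOC f g U) ∧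
    ((∃ U : Set (Em m × Mat n), IsOpen U ∧ zbar ∈ U ∧ UnifWSOC f g U) →
      ∃ V : Set (Mat n), IsOpen V ∧ zbar.2 ∈ V ∧
        UnifWSOC f g (({zbar.1} : Set (Em m)) ×ˢ V)) ∧
    (SONC f g zbar →
      ((∃ V : Set (Mat n), IsOpen V ∧ zbar.2 ∈ V ∧
          UnifWSOC f g (({zbar.1} : Set (Em m)) ×ˢ V)) →
        SSOSC f g zbar)) := by
  refine ⟨exists_unifWSOC_of_SSOSC hf hg, fun ⟨U, hU, hzU, hW⟩ => ?_,
    fun _ ⟨V, hV, hyV, hW⟩ => SSOSC_of_unifWSOC_slice hf hg hsym hV hyV hW⟩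
  refine ⟨{y | (zbar.1, y) ∈ U}, hU.preimage (Continuous.prodMk_right zbar.1), hzU, hW.mono ?_⟩
  rintro ⟨x, y⟩ ⟨rfl, hy⟩
  exact hy

/-- (a) S-SOSC at `z̄` implies (b) the uniform W-SOC on a neighborhood of
`z̄`; (b) implies (c) the uniform W-SOC on `{x̄} × V` for a neighborhood `V` of `ȳ`;
and if the SONC holds at `z̄`, then (a), (b), (c) are equivalent. -/
theorem SSOSC_iff_uniform_WSOC {m n : ℕ}
    (f : Em m → ℝ) (g : Em m → Mat n)
    (hf : ContDiff ℝ 2 f) (hg : ContDiff ℝ 2 g) (hgs : ∀ x, (g x).IsSymm)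
    (zbar : Em m × Mat n) (hsym : zbar.2.IsSymm) :
    (SSOSC f g zbar →
      ∃ U : Set (Em m × Mat n), IsOpen U ∧ zbar ∈ U ∧ UnifWSOC f g U) ∧
    ((∃ U : Set (Em m × Mat n), IsOpen U ∧ zbar ∈ U ∧ UnifWSOC f g U) →
      ∃ V : Set (Mat n), IsOpen V ∧ zbar.2 ∈ V ∧
        UnifWSOC f g (({zbar.1} : Set (Em m)) ×ˢ V)) ∧
    (SONC f g zbar →
      ((∃ V : Set (Mat n), IsOpen V ∧ zbar.2 ∈ V ∧
          UnifWSOC f g (({zbar.1} : Set (Em m)) ×ˢ V)) →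
        SSOSC f g zbar)) :=
  SSOSC_iff_uniform_WSOC_general f g hf hg zbar hsym
end

section
/- Let z̄ = (x̄,ȳ) be a KKT pair (F(z̄) = 0), let p, q be the positive and negative inertia indices of G(z̄) (so z̄ ∈ M̃_{p,q}), and assume the W-SOC and the SRCQ hold at z̄. Then Δ = 0 is the only element Δ of the normal space N_{G(z̄)}M_{p,q} satisfying F(x̄, ȳ + Δ) = 0. -/
open scoped Classical RealInnerProductSpace
open Matrix Set

/-! The first KKT components at `ȳ` and `ȳ + Δ` give `∇g(x̄)Δ = 0`, i.e. `Δ ⟂ g'(x̄)[ℝᵐ]`.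
The second ones give `Π₊(G(z̄) + Δ) = Π₊(G(z̄))`, so by Moreau's decomposition
`Π₊(G(z̄)) - G(z̄) - Δ ⪰ 0`; since `PᵀΔP` lives on the `ββ` block, where `Π₊(G(z̄)) - G(z̄)`
vanishes, this says `PᵀΔP ⪯ 0`. Writing `Δ = g'(x̄)v + PBPᵀ` by the SRCQ, orthogonality leaves
`‖Δ‖² = ⟨PᵀΔP, B_ββ⟩ ≤ 0`, as `B_ββ ⪰ 0`. -/

namespace Matrix

variable {ι : Type*} [Fintype ι]

theorem sum_sum_mul_mul_eq_dotProduct_mulVec (M : Matrix ι ι ℝ) (u : ι → ℝ) :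
    ∑ i, ∑ j, u i * M i j * u j = u ⬝ᵥ M *ᵥ u := by
  simp only [dotProduct, mulVec, Finset.mul_sum, mul_assoc]

theorem posSemidef_of_isSymm_of_forall {M : Matrix ι ι ℝ} (hM : M.IsSymm)
    (h : ∀ u : ι → ℝ, 0 ≤ ∑ i, ∑ j, u i * M i j * u j) : M.PosSemidef :=
  .of_dotProduct_mulVec_nonneg (isHermitian_iff_isSymm.mpr hM) fun u => by
    simpa [sum_sum_mul_mul_eq_dotProduct_mulVec] using h u

open scoped MatrixOrder in
theorem PosSemidef.trace_mul_nonneg {X Y : Matrix ι ι ℝ} (hX : X.PosSemidef)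
    (hY : Y.PosSemidef) : 0 ≤ (X * Y).trace := by
  classical
  obtain ⟨S, rfl⟩ := CStarAlgebra.nonneg_iff_eq_star_mul_self.mp hX.nonneg
  rw [Matrix.mul_assoc, trace_mul_comm, Matrix.mul_assoc, star_eq_conjTranspose]
  simpa only [Matrix.mul_assoc] using
    (hY.mul_mul_conjTranspose_same S).trace_nonneg

theorem eq_zero_of_trace_transpose_mul_self_nonpos {M : Matrix ι ι ℝ}
    (h : (Mᵀ * M).trace ≤ 0) : M = 0 :=
  trace_conjTranspose_mul_self_eq_zero_iff.mp
    (le_antisymm h (posSemidef_conjTranspose_mul_self M).trace_nonneg)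

end Matrix

namespace IsOrthoMat

variable {n : ℕ} {P : Mat n}

theorem conj_conj (hP : IsOrthoMat P) (M : Mat n) : Pᵀ * (P * M * Pᵀ) * P = M := by
  rw [show Pᵀ * (P * M * Pᵀ) * P = (Pᵀ * P) * M * (Pᵀ * P) by noncomm_ring, hP.2,
    Matrix.one_mul, Matrix.mul_one]

theorem submatrix_id_equiv (hP : IsOrthoMat P) (σ : Equiv.Perm (Fin n)) :
    IsOrthoMat (P.submatrix id σ) := by
  constructor
  · rw [transpose_submatrix, submatrix_mul_equiv, hP.1, submatrix_id_id]
  · rw [transpose_submatrix, ← submatrix_mul _ _ _ _ _ Function.bijective_id, hP.2]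
    exact submatrix_one_equiv σ

end IsOrthoMat

theorem IsEigDecomp.isSymm {n : ℕ} {A P : Mat n} {lam : Fin n → ℝ}
    (h : IsEigDecomp A P lam) : A.IsSymm := by
  rw [h.2.2, Matrix.IsSymm, transpose_mul, transpose_mul, transpose_transpose,
    diagonal_transpose, Matrix.mul_assoc]

theorem isOrthoMat_of_mem_unitaryGroup {n : ℕ} {U : Mat n} (hU : U ∈ unitaryGroup (Fin n) ℝ) :
    IsOrthoMat U := by
  simpa only [IsOrthoMat, star_eq_conjTranspose, conjTranspose_eq_transpose_of_trivial] using
    And.intro (mem_unitaryGroup_iff.mp hU) (mem_unitaryGroup_iff'.mp hU)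

theorem exists_isOrthoMat_eq_conj_diagonal {n : ℕ} {A : Mat n} (hA : A.IsSymm) :
    ∃ U d, IsOrthoMat U ∧ A = U * Matrix.diagonal d * Uᵀ := by
  have hH : A.IsHermitian := isHermitian_iff_isSymm.mpr hA
  refine ⟨hH.eigenvectorUnitary, hH.eigenvalues,
    isOrthoMat_of_mem_unitaryGroup hH.eigenvectorUnitary.2, ?_⟩
  simpa [Unitary.conjStarAlgAut_apply, star_eq_conjTranspose] using hH.spectral_theorem

theorem exists_isEigDecomp {n : ℕ} {A : Mat n} (hA : A.IsSymm) :
    ∃ P lam, IsEigDecomp A P lam := by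
  obtain ⟨U, d, hU, hAU⟩ := exists_isOrthoMat_eq_conj_diagonal hA
  set σ := Tuple.sort (OrderDual.toDual ∘ d)
  refine ⟨U.submatrix id σ, d ∘ σ, hU.submatrix_id_equiv σ,
    monotone_toDual_comp_iff.mp (Tuple.monotone_sort _), ?_⟩
  rw [← submatrix_diagonal_equiv, transpose_submatrix, submatrix_mul_equiv,
    submatrix_mul_equiv, submatrix_id_id, hAU]

section PSDProjection

variable {n : ℕ}

/-- Moreau's characterization of `X = Π₊(A)`. -/
def IsPSDProj (A X : Mat n) : Prop :=
  X.PosSemidef ∧ (X - A).PosSemidef ∧ ((X - A) * X).trace = 0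

theorem IsPSDProj.unique {A X Y : Mat n} (hX : IsPSDProj A X) (hY : IsPSDProj A Y) :
    X = Y := by
  obtain ⟨hX, hXA, hXc⟩ := hX
  obtain ⟨hY, hYA, hYc⟩ := hY
  have hsymm : (X - Y)ᵀ = X - Y := by
    rw [transpose_sub, (isHermitian_iff_isSymm.mp hX.1).eq, (isHermitian_iff_isSymm.mp hY.1).eq]
  refine sub_eq_zero.mp (eq_zero_of_trace_transpose_mul_self_nonpos ?_)
  have hexpand : (X - Y) * (X - Y) = (X - A) * X + (Y - A) * Y - (X - A) * Y - (Y - A) * X := by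
    noncomm_ring
  rw [hsymm, hexpand, trace_sub, trace_sub, trace_add, hXc, hYc]
  linarith [hXA.trace_mul_nonneg hY, hYA.trace_mul_nonneg hX]

theorem posSemidef_conj_diagonal {Q : Mat n} {d : Fin n → ℝ} (hd : ∀ i, 0 ≤ d i) :
    (Q * Matrix.diagonal d * Qᵀ).PosSemidef := by
  simpa only [conjTranspose_eq_transpose_of_trivial] using
    (PosSemidef.diagonal hd).mul_mul_conjTranspose_same Q

theorem isPSDProj_conj_diagonal {A Q : Mat n} {μ : Fin n → ℝ} (hQ : IsOrthoMat Q)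
    (hA : A = Q * Matrix.diagonal μ * Qᵀ) :
    IsPSDProj A (Q * Matrix.diagonal (fun i => max (μ i) 0) * Qᵀ) := by
  have hsub : Q * Matrix.diagonal (fun i => max (μ i) 0) * Qᵀ - A
      = Q * Matrix.diagonal (fun i => max (μ i) 0 - μ i) * Qᵀ := by
    rw [hA, ← diagonal_sub]
    noncomm_ring
  refine ⟨posSemidef_conj_diagonal fun i => le_max_right _ _, ?_, ?_⟩
  · rw [hsub]
    exact posSemidef_conj_diagonal fun i => sub_nonneg.mpr (le_max_left _ _)
  · rw [hsub, show ∀ D E : Mat n, (Q * D * Qᵀ) * (Q * E * Qᵀ) = Q * (D * (Qᵀ * Q) * E) * Qᵀ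
      from fun _ _ => by noncomm_ring, hQ.2, Matrix.mul_one, diagonal_mul_diagonal,
      trace_mul_cycle, hQ.2, Matrix.one_mul, trace_diagonal]
    refine Finset.sum_eq_zero fun i _ => ?_
    rcases le_total (μ i) 0 with h | h <;> simp [h]

theorem piPlus_eq_of_isEigDecomp {A Q : Mat n} {μ : Fin n → ℝ} (h : IsEigDecomp A Q μ) :
    piPlus A = Q * Matrix.diagonal (fun i => max (μ i) 0) * Qᵀ := by
  have hex : ∃ P lam, IsEigDecomp A P lam := ⟨Q, μ, h⟩
  obtain ⟨hP, -, hA⟩ := hex.choose_spec.choose_spec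
  rw [piPlus, dif_pos hex]
  exact (isPSDProj_conj_diagonal hP hA).unique (isPSDProj_conj_diagonal h.1 h.2.2)

theorem posSemidef_piPlus_sub_self {A : Mat n} (hA : A.IsSymm) : (piPlus A - A).PosSemidef := by
  obtain ⟨Q, μ, h⟩ := exists_isEigDecomp hA
  rw [piPlus_eq_of_isEigDecomp h]
  exact (isPSDProj_conj_diagonal h.1 h.2.2).2.1

end PSDProjection

section Adjoint

variable {m n : ℕ} (g : Em m → Mat n) (x : Em m)

theorem gradg_add (H K : Mat n) : gradg g x (H + K) = gradg g x H + gradg g x K := by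
  simp only [gradg, ← map_add]
  congr 1
  funext k
  simp [transpose_add, Matrix.add_mul]

theorem inner_gradg (H : Mat n) (v : Em m) :
    ⟪gradg g x H, v⟫ = (Hᵀ * fderiv ℝ g x v).trace := by
  conv_rhs => rw [← (EuclideanSpace.basisFun (Fin m) ℝ).sum_repr v]
  simp [gradg, PiLp.inner_apply, map_sum, Matrix.mul_sum, trace_sum]

end Adjoint

section ZeroBlock

variable {n : ℕ} (lam : Fin n → ℝ)

/-- The coordinate projection onto `β = {i | lam i = 0}`. -/
noncomputable def projZero : Mat n := Matrix.diagonal fun i => if lam i = 0 then 1 else 0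

theorem projZero_mul_mul_projZero_apply (M : Mat n) (i j : Fin n) :
    (projZero lam * M * projZero lam) i j = if lam i = 0 ∧ lam j = 0 then M i j else 0 := by
  by_cases hi : lam i = 0 <;> by_cases hj : lam j = 0 <;>
    simp [projZero, diagonal_mul, mul_diagonal, hi, hj]

variable {lam}

theorem projZero_mul_mul_projZero_of_forall {M : Mat n}
    (hM : ∀ i j, (lam i ≠ 0 ∨ lam j ≠ 0) → M i j = 0) :
    projZero lam * M * projZero lam = M := by
  ext i j
  rw [projZero_mul_mul_projZero_apply]
  split_ifs with h
  · rfl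
  · exact (hM i j (not_and_or.mp h)).symm

theorem projZero_mul_diagonal_mul_projZero {d : Fin n → ℝ} (hd : ∀ i, lam i = 0 → d i = 0) :
    projZero lam * Matrix.diagonal d * projZero lam = 0 := by
  ext i j
  rw [projZero_mul_mul_projZero_apply]
  split_ifs with h
  · rcases eq_or_ne i j with rfl | hij
    · simp [hd i h.1]
    · exact diagonal_apply_ne _ hij
  · rfl

theorem posSemidef_projZero_mul_mul_projZero {B : Mat n} (hB : B.IsSymm)
    (hBβ : ∀ u : Fin n → ℝ, (∀ i, lam i ≠ 0 → u i = 0) →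
      0 ≤ ∑ i, ∑ j, u i * B i j * u j) :
    (projZero lam * B * projZero lam).PosSemidef := by
  refine posSemidef_of_isSymm_of_forall ?_ fun u => ?_
  · rw [Matrix.IsSymm, transpose_mul, transpose_mul, hB.eq, projZero, diagonal_transpose,
      Matrix.mul_assoc]
  · convert hBβ (fun i => if lam i = 0 then u i else 0) (fun i hi => if_neg hi) using 1
    refine Finset.sum_congr rfl fun i _ => Finset.sum_congr rfl fun j _ => ?_
    rw [projZero_mul_mul_projZero_apply]
    by_cases hi : lam i = 0 <;> by_cases hj : lam j = 0 <;> simp [hi, hj]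

end ZeroBlock

section NormalSpace

variable {n : ℕ} {P Δ : Mat n} {lam : Fin n → ℝ}

theorem neg_conj_posSemidef_of_memNormal (hP : IsOrthoMat P) (hΔ : memNormal P lam Δ)
    (h : (P * Matrix.diagonal (fun i => max (lam i) 0) * Pᵀ
      - (P * Matrix.diagonal lam * Pᵀ + Δ)).PosSemidef) :
    (-(Pᵀ * Δ * P)).PosSemidef := by
  set E := projZero lam
  set X := P * Matrix.diagonal (fun i => max (lam i) 0) * Pᵀ - (P * Matrix.diagonal lam * Pᵀ + Δ)
  have hX : Pᵀ * X * P = Matrix.diagonal (fun i => max (lam i) 0 - lam i) - Pᵀ * Δ * P := by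
    rw [← diagonal_sub, ← hP.conj_conj (Matrix.diagonal _), ← hP.conj_conj (Matrix.diagonal lam)]
    simp only [X]
    noncomm_ring
  have hE : Eᵀ = E := diagonal_transpose _
  -- on `β` the diagonal part `max λ 0 - λ` vanishes and `PᵀΔP` lives on `β × β`
  have hEXE : (P * E)ᵀ * X * (P * E) = -(Pᵀ * Δ * P) := by
    rw [transpose_mul, hE, show E * Pᵀ * X * (P * E) = E * (Pᵀ * X * P) * E by noncomm_ring,
      hX, Matrix.mul_sub, Matrix.sub_mul,
      projZero_mul_diagonal_mul_projZero fun i hi => by simp [hi],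
      projZero_mul_mul_projZero_of_forall hΔ.2, zero_sub]
  simpa only [hEXE, conjTranspose_eq_transpose_of_trivial] using
    h.conjTranspose_mul_mul_same (P * E)

theorem eq_zero_of_memNormal_of_eq_add_conj {A B : Mat n} (hΔ : memNormal P lam Δ)
    (hD : (-(Pᵀ * Δ * P)).PosSemidef) (hA : (Δᵀ * A).trace = 0) (hB : B.IsSymm)
    (hBβ : ∀ u : Fin n → ℝ, (∀ i, lam i ≠ 0 → u i = 0) →
      0 ≤ ∑ i, ∑ j, u i * B i j * u j)
    (hΔeq : Δ = A + P * B * Pᵀ) : Δ = 0 := by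
  set D := Pᵀ * Δ * P
  set E := projZero lam
  refine eq_zero_of_trace_transpose_mul_self_nonpos ?_
  have hBD : (Δᵀ * (P * B * Pᵀ)).trace = (D * (E * B * E)).trace :=
    calc (Δᵀ * (P * B * Pᵀ)).trace = (Pᵀ * (Δ * P * B)).trace := by
          rw [hΔ.1.eq, show Δ * (P * B * Pᵀ) = Δ * P * B * Pᵀ by noncomm_ring, trace_mul_comm]
      _ = (E * D * E * B).trace := by
          rw [projZero_mul_mul_projZero_of_forall hΔ.2, ← Matrix.mul_assoc, ← Matrix.mul_assoc]
      _ = (D * (E * B * E)).trace := by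
          rw [Matrix.mul_assoc, Matrix.mul_assoc, trace_mul_comm, Matrix.mul_assoc,
            Matrix.mul_assoc, Matrix.mul_assoc]
  calc (Δᵀ * Δ).trace = (Δᵀ * A).trace + (Δᵀ * (P * B * Pᵀ)).trace := by
        rw [← trace_add, ← Matrix.mul_add, ← hΔeq]
    _ = -((-D) * (E * B * E)).trace := by rw [hA, hBD, Matrix.neg_mul, trace_neg, neg_neg, zero_add]
    _ ≤ 0 := neg_nonpos.mpr (hD.trace_mul_nonneg (posSemidef_projZero_mul_mul_projZero hB hBβ))

end NormalSpace

section KKT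

variable {m n : ℕ} {f : Em m → ℝ} {g : Em m → Mat n} {z : Em m × Mat n} {Δ : Mat n}

theorem trace_transpose_mul_fderiv_eq_zero_of_kkt (hkkt : KKTF f g z = 0)
    (hkkt' : KKTF f g (z.1, z.2 + Δ) = 0) (v : Em m) :
    (Δᵀ * fderiv ℝ g z.1 v).trace = 0 := by
  have h₀ : gradient f z.1 + gradg g z.1 z.2 = 0 := congrArg Prod.fst hkkt
  have h₁ : gradient f z.1 + gradg g z.1 (z.2 + Δ) = 0 := congrArg Prod.fst hkkt'
  rw [gradg_add, ← add_assoc, h₀, zero_add] at h₁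
  rw [← inner_gradg, h₁, inner_zero_left]

theorem piPlus_add_eq_of_kkt (hkkt : KKTF f g z = 0) (hkkt' : KKTF f g (z.1, z.2 + Δ) = 0) :
    piPlus (Gmap g z + Δ) = piPlus (Gmap g z) := by
  have h₀ : -g z.1 + piPlus (Gmap g z) = 0 := congrArg Prod.snd hkkt
  have h₁ : -g z.1 + piPlus (Gmap g (z.1, z.2 + Δ)) = 0 := congrArg Prod.snd hkkt'
  rw [Gmap, ← add_assoc] at h₁
  exact add_left_cancel (h₁.trans h₀.symm)

theorem neg_conj_posSemidef_of_kkt {P : Mat n} {lam : Fin n → ℝ}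
    (hdec : IsEigDecomp (Gmap g z) P lam) (hΔ : memNormal P lam Δ) (hkkt : KKTF f g z = 0)
    (hkkt' : KKTF f g (z.1, z.2 + Δ) = 0) : (-(Pᵀ * Δ * P)).PosSemidef := by
  have h := posSemidef_piPlus_sub_self (hdec.isSymm.add hΔ.1)
  rw [piPlus_add_eq_of_kkt hkkt hkkt', piPlus_eq_of_isEigDecomp hdec, hdec.2.2] at h
  exact neg_conj_posSemidef_of_memNormal hdec.1 hΔ h

end KKT

theorem normal_space_unique_zero_general {m n : ℕ}
    (f : Em m → ℝ) (g : Em m → Mat n)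
    (zbar : Em m × Mat n)
    (hkkt : KKTF f g zbar = 0)
    (hS : SRCQ g zbar)
    (P : Mat n) (lam : Fin n → ℝ) (hdec : IsEigDecomp (Gmap g zbar) P lam) :
    ∀ Δ : Mat n, memNormal P lam Δ →
      KKTF f g (zbar.1, zbar.2 + Δ) = 0 → Δ = 0 := by
  intro Δ hΔ hkkt'
  obtain ⟨v, B, hB, hBβ, -, -, hΔeq⟩ := hS P lam hdec Δ hΔ.1
  exact eq_zero_of_memNormal_of_eq_add_conj hΔ (neg_conj_posSemidef_of_kkt hdec hΔ hkkt hkkt')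
    (trace_transpose_mul_fderiv_eq_zero_of_kkt hkkt hkkt' v) hB hBβ hΔeq

/-- If `z̄ = (x̄,ȳ)` is a KKT pair in `M̃_{p,q}` at which the W-SOC and
the SRCQ hold, then `Δ = 0` is the only element of the normal space `N_{G(z̄)}M_{p,q}`
with `F(x̄, ȳ + Δ) = 0`. -/
theorem normal_space_unique_zero {m n p q : ℕ}
    (f : Em m → ℝ) (g : Em m → Mat n)
    (hf : ContDiff ℝ 2 f) (hg : ContDiff ℝ 2 g) (hgs : ∀ x, (g x).IsSymm)
    (zbar : Em m × Mat n)
    (hkkt : KKTF f g zbar = 0)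
    (hz : zbar ∈ lstratum g p q)
    (hW : WSOC f g zbar) (hS : SRCQ g zbar)
    (P : Mat n) (lam : Fin n → ℝ) (hdec : IsEigDecomp (Gmap g zbar) P lam) :
    ∀ Δ : Mat n, memNormal P lam Δ →
      KKTF f g (zbar.1, zbar.2 + Δ) = 0 → Δ = 0 :=
  normal_space_unique_zero_general f g zbar hkkt hS P lam hdec
end
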